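/- Let B ∈ M_3 be a unitary matrix with tr(B* Bᵀ) = −1, where Bᵀ is the transpose of B. Define the linear maps L and Γ on M_3 by L(X) := (1/2)(tr(X) I₃ − B Xᵀ B* − 2X) and Γ(X) := (1/2)(B Xᵀ B* + (1/3) tr(X) I₃). Then: (i) L is Hermitian-preserving with L(I₃) = 0 and tr(L(X)) = 0 for all X; (ii) Γ is Hermitian-preserving, unital, trace-preserving, satisfies ⟨id, Γ⟩ = 0, and ⟨Ad_U, Γ⟩ ≥ 0 for every unitary U ∈ M_3 (i.e. Γ ∈ D(3)); (iii) ⟨Γ, L⟩ = −1/9. -/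

import Mathlib

noncomputable section
open scoped Kronecker
open Filter Topology Matrix

/-- `M_d`, the algebra of `d × d` complex matrices. -/
abbrev Md (d : ℕ) := Matrix (Fin d) (Fin d) ℂ

/-- `Ad_U : X ↦ U* X U` for a unitary `U`. -/
def adU {d : ℕ} (U : Matrix.unitaryGroup (Fin d) ℂ) : Md d →ₗ[ℂ] Md d where
  toFun X := (U : Md d)ᴴ * X * (U : Md d)
  map_add' X Y := by simp [Matrix.mul_add, Matrix.add_mul]
  map_smul' c X := by simp [Matrix.mul_smul, Matrix.smul_mul]

/-- A linear map is completely positive if it has a Kraus decomposition. -/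
def IsCP {d : ℕ} (Φ : Md d →ₗ[ℂ] Md d) : Prop :=
  ∃ (n : ℕ) (V : Fin n → Md d), ∀ X, Φ X = ∑ j, (V j)ᴴ * X * (V j)

def IsUnital {d : ℕ} (Φ : Md d →ₗ[ℂ] Md d) : Prop := Φ 1 = 1

def IsTracePreserving {d : ℕ} (Φ : Md d →ₗ[ℂ] Md d) : Prop :=
  ∀ X, (Φ X).trace = X.trace

def IsHermitianPreserving {d : ℕ} (Φ : Md d →ₗ[ℂ] Md d) : Prop :=
  ∀ X, Φ Xᴴ = (Φ X)ᴴ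

/-- A unital quantum channel: CP, unital and trace-preserving. -/
def IsUnitalChannel {d : ℕ} (Φ : Md d →ₗ[ℂ] Md d) : Prop :=
  IsCP Φ ∧ IsUnital Φ ∧ IsTracePreserving Φ

/-- A mixed unitary channel: a convex combination of unitary conjugations. -/
def IsMixedUnitary {d : ℕ} (Φ : Md d →ₗ[ℂ] Md d) : Prop :=
  ∃ (ℓ : ℕ) (U : Fin ℓ → Matrix.unitaryGroup (Fin d) ℂ) (lam : Fin ℓ → ℝ),
    (∀ j, 0 ≤ lam j) ∧ (∀ j, lam j ≤ 1) ∧ (∑ j, lam j = 1) ∧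
    Φ = ∑ j, (lam j : ℂ) • adU (U j)

/-- The Choi matrix `J(Φ) = (1/d) ∑_{i,j} E_{ij} ⊗ Φ(E_{ij})`. -/
def choi {d : ℕ} (Φ : Md d →ₗ[ℂ] Md d) : Matrix (Fin d × Fin d) (Fin d × Fin d) ℂ :=
  (d : ℂ)⁻¹ • ∑ i : Fin d, ∑ j : Fin d,
    (Matrix.single i j (1 : ℂ)) ⊗ₖ Φ (Matrix.single i j (1 : ℂ))

/-- `⟨Φ, Ψ⟩ = tr(J(Φ)* J(Ψ))`; this is a real number whenever `Φ, Ψ` are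
Hermitian-preserving, so we record its real part. -/
def pairRe {d : ℕ} (Φ Ψ : Md d →ₗ[ℂ] Md d) : ℝ := (((choi Φ)ᴴ * choi Ψ).trace).re

/-- The Hilbert–Schmidt (Choi) norm `‖Φ‖₂ = tr(J(Φ)* J(Φ))^{1/2}`. -/
def hsNorm {d : ℕ} (Φ : Md d →ₗ[ℂ] Md d) : ℝ := Real.sqrt (pairRe Φ Φ)

attribute [local instance] Matrix.normedAddCommGroup Matrix.normedSpace

/-- The exponential `e^{tL}` of a linear map `L` on `M_d`. -/
def expL {d : ℕ} (L : Md d →ₗ[ℂ] Md d) (t : ℝ) : Md d →ₗ[ℂ] Md d :=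
  letI : IsTopologicalRing (Md d →L[ℂ] Md d) :=
    @NonUnitalSeminormedRing.toIsTopologicalRing _
      (@NormedRing.toSeminormedRing (Md d →L[ℂ] Md d)
        ContinuousLinearMap.toNormedRing).toNonUnitalSeminormedRing
  ((NormedSpace.exp ((t : ℂ) • (LinearMap.toContinuousLinearMap L)) :
      Md d →L[ℂ] Md d)).toLinearMap

/-- Membership in `D(d)`: Hermitian-preserving, unital, trace-preserving maps `Γ` with
`⟨id, Γ⟩ = 0` and `⟨Ad_U, Γ⟩ ≥ 0` for all unitaries `U`. -/
def MemD {d : ℕ} (Γ : Md d →ₗ[ℂ] Md d) : Prop :=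
  IsHermitianPreserving Γ ∧ IsUnital Γ ∧ IsTracePreserving Γ ∧
    pairRe LinearMap.id Γ = 0 ∧
    ∀ U : Matrix.unitaryGroup (Fin d) ℂ, 0 ≤ pairRe (adU U) Γ

/-!
Write `T(X) = B Xᵀ B*` and `τ(X) = tr(X) I`, so that `Γ = ½ (T + τ/3)` and
`L = ½ (τ − T − 2 id)`. The Choi pairing is sesquilinear, and the pairings among `Ad_U`, `T`, `τ`
are explicit: `⟨Ad_U, T⟩ = tr(C* Cᵀ)/9` with `C = UB`, `⟨Ad_U, τ⟩ = ⟨T, τ⟩ = 1/3`,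
`⟨T, T⟩ = ⟨τ, τ⟩ = 1`, and `id = Ad_I`. Everything is then arithmetic except
`⟨Ad_U, Γ⟩ = (tr(C* Cᵀ) + 1)/18 ≥ 0`, i.e. `Re tr(C* Cᵀ) ≥ −1` for every unitary `C ∈ M_3`.
Here `Re tr(C* Cᵀ) = 3 − s` with `2s = ‖C − Cᵀ‖²_F`. The antisymmetric matrix `C − Cᵀ` is a
cross product `u × ·`, so by Lagrange's identity it scales vectors orthogonal to `u` by `√s`,
while as a difference of two unitaries it has operator norm at most `2`; hence `s ≤ 4`.
-/

open Matrix ComplexConjugate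

section VecNormSq

variable {n : Type*} [Fintype n]

def vecNormSq (v : n → ℂ) : ℝ := ∑ i, Complex.normSq (v i)

lemma ofReal_vecNormSq (v : n → ℂ) : (vecNormSq v : ℂ) = star v ⬝ᵥ v := by
  simp [vecNormSq, dotProduct, Complex.normSq_eq_conj_mul_self]

lemma vecNormSq_sub_le (v w : n → ℂ) :
    vecNormSq (v - w) ≤ 2 * vecNormSq v + 2 * vecNormSq w := by
  simp only [vecNormSq, Pi.sub_apply, Finset.mul_sum, ← Finset.sum_add_distrib]
  refine Finset.sum_le_sum fun i _ => ?_
  simp only [Complex.normSq_apply, Complex.sub_re, Complex.sub_im]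
  nlinarith [sq_nonneg ((v i).re + (w i).re), sq_nonneg ((v i).im + (w i).im)]

variable [DecidableEq n]

lemma vecNormSq_mulVec_of_mem_unitaryGroup {C : Matrix n n ℂ} (hC : C ∈ unitaryGroup n ℂ)
    (v : n → ℂ) : vecNormSq (C *ᵥ v) = vecNormSq v := by
  have h : star (C *ᵥ v) ⬝ᵥ (C *ᵥ v) = star v ⬝ᵥ v := by
    rw [star_mulVec, dotProduct_mulVec, vecMul_vecMul, ← star_eq_conjTranspose,
      mem_unitaryGroup_iff'.mp hC, vecMul_one]
  exact_mod_cast (ofReal_vecNormSq _).trans (h.trans (ofReal_vecNormSq v).symm)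

lemma vecNormSq_sub_transpose_mulVec_le {C : Matrix n n ℂ} (hC : C ∈ unitaryGroup n ℂ)
    (v : n → ℂ) : vecNormSq ((C - Cᵀ) *ᵥ v) ≤ 4 * vecNormSq v := by
  rw [sub_mulVec]
  linarith [vecNormSq_sub_le (C *ᵥ v) (Cᵀ *ᵥ v), vecNormSq_mulVec_of_mem_unitaryGroup hC v,
    vecNormSq_mulVec_of_mem_unitaryGroup (transpose_mem_unitaryGroup_iff.mpr hC) v]

lemma sum_normSq_of_mem_unitaryGroup {C : Matrix n n ℂ} (hC : C ∈ unitaryGroup n ℂ) :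
    ∑ i, ∑ j, Complex.normSq (C i j) = Fintype.card n := by
  have h : (Cᴴ * C).trace = ∑ j, ∑ i, (Complex.normSq (C i j) : ℂ) := by
    simp [trace, mul_apply, Complex.normSq_eq_conj_mul_self]
  rw [← star_eq_conjTranspose, mem_unitaryGroup_iff'.mp hC, trace_one, Finset.sum_comm] at h
  exact_mod_cast h.symm

end VecNormSq

/-- Lagrange's identity `‖v × u‖² + |⟨u, v⟩|² = ‖u‖² ‖v‖²` for `u = (c, -b, a)`, with the cross
product `v ↦ v × u` written as an antisymmetric matrix. -/
lemma vecNormSq_antisymm_mulVec_add_normSq (a b c : ℂ) (v : Fin 3 → ℂ) :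
    vecNormSq (!![0, a, b; -a, 0, c; -b, -c, 0] *ᵥ v)
        + Complex.normSq (conj c * v 0 - conj b * v 1 + conj a * v 2)
      = (Complex.normSq a + Complex.normSq b + Complex.normSq c) * vecNormSq v := by
  simp only [vecNormSq, Fin.sum_univ_three, mulVec, dotProduct, Complex.normSq_apply,
    cons_val_zero, cons_val_one, cons_val_two, head_cons, tail_cons, of_apply,
    Complex.add_re, Complex.add_im, Complex.sub_re, Complex.sub_im, Complex.mul_re,
    Complex.mul_im, Complex.neg_re, Complex.neg_im, Complex.conj_re, Complex.conj_im,
    Complex.zero_re, Complex.zero_im]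
  ring

lemma normSq_add_normSq_add_normSq_le_four (a b c : ℂ)
    (h : ∀ v, vecNormSq (!![0, a, b; -a, 0, c; -b, -c, 0] *ᵥ v) ≤ 4 * vecNormSq v) :
    Complex.normSq a + Complex.normSq b + Complex.normSq c ≤ 4 := by
  set s := Complex.normSq a + Complex.normSq b + Complex.normSq c
  have orthogonal_le : ∀ v : Fin 3 → ℂ, conj c * v 0 - conj b * v 1 + conj a * v 2 = 0 →
      s * vecNormSq v ≤ 4 * vecNormSq v := fun v hv => by
    have := vecNormSq_antisymm_mulVec_add_normSq a b c v
    rw [hv, map_zero, add_zero] at this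
    exact this ▸ h v
  -- three vectors orthogonal to `(c, -b, a)` whose squared norms add up to `2 s`
  have h₁ := orthogonal_le ![conj b, conj c, 0] (by simp; ring)
  have h₂ := orthogonal_le ![conj a, 0, -conj c] (by simp; ring)
  have h₃ := orthogonal_le ![0, conj a, conj b] (by simp; ring)
  simp only [vecNormSq, Fin.sum_univ_three, cons_val_zero, cons_val_one, cons_val_two,
    head_cons, tail_cons, Complex.normSq_conj, Complex.normSq_neg, map_zero] at h₁ h₂ h₃
  nlinarith [Complex.normSq_nonneg a, Complex.normSq_nonneg b, Complex.normSq_nonneg c]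

lemma neg_one_le_re_trace_conjTranspose_mul_transpose {C : Matrix (Fin 3) (Fin 3) ℂ}
    (hC : C ∈ unitaryGroup (Fin 3) ℂ) : -1 ≤ (Cᴴ * Cᵀ).trace.re := by
  set a := C 0 1 - C 1 0
  set b := C 0 2 - C 2 0
  set c := C 1 2 - C 2 1
  have hA : C - Cᵀ = !![0, a, b; -a, 0, c; -b, -c, 0] := by
    ext i j; fin_cases i <;> fin_cases j <;> simp [a, b, c]
  have hs := normSq_add_normSq_add_normSq_le_four a b c fun v =>
    hA ▸ vecNormSq_sub_transpose_mulVec_le hC v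
  have htr : (Cᴴ * Cᵀ).trace.re = ∑ i, ∑ j, Complex.normSq (C i j)
      - (Complex.normSq a + Complex.normSq b + Complex.normSq c) := by
    simp only [trace, diag, mul_apply, Fin.sum_univ_three, conjTranspose_apply, transpose_apply,
      Complex.add_re, Complex.mul_re, Complex.normSq_apply, Complex.sub_re, Complex.sub_im,
      Complex.star_def, Complex.conj_re, Complex.conj_im, a, b, c]
    ring
  rw [htr, sum_normSq_of_mem_unitaryGroup hC]
  norm_num
  linarith

section MatrixLemmas

variable {n α : Type*} [Fintype n] [DecidableEq n]

lemma trace_single [AddCommMonoid α] (i j : n) (c : α) :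
    (single i j c).trace = if i = j then c else 0 := by
  split_ifs with h
  · simp [h]
  · exact trace_single_eq_of_ne i j c h

variable [CommRing α] [StarRing α]

lemma trace_conj_of_mem_unitaryGroup {U : Matrix n n α} (hU : U ∈ unitaryGroup n α)
    (X : Matrix n n α) : (U * X * Uᴴ).trace = X.trace := by
  rw [trace_mul_cycle, ← star_eq_conjTranspose, mem_unitaryGroup_iff'.mp hU, Matrix.one_mul]

lemma trace_conjTranspose_conj_of_mem_unitaryGroup {U : Matrix n n α}
    (hU : U ∈ unitaryGroup n α) (X : Matrix n n α) : (Uᴴ * X * U).trace = X.trace := by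
  rw [trace_mul_cycle, ← star_eq_conjTranspose, mem_unitaryGroup_iff.mp hU, Matrix.one_mul]

end MatrixLemmas

section ChoiPair

variable {d : ℕ}

def choiPair (Φ Ψ : Md d →ₗ[ℂ] Md d) : ℂ := ((choi Φ)ᴴ * choi Ψ).trace

lemma pairRe_eq_re_choiPair (Φ Ψ : Md d →ₗ[ℂ] Md d) : pairRe Φ Ψ = (choiPair Φ Ψ).re := rfl

lemma choi_apply (Φ : Md d →ₗ[ℂ] Md d) (i k j l : Fin d) :
    choi Φ (i, k) (j, l) = (d : ℂ)⁻¹ * Φ (single i j 1) k l := by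
  simp [choi, Matrix.sum_apply, kroneckerMap_apply, single_apply, ite_and]

lemma choiPair_eq_sum (Φ Ψ : Md d →ₗ[ℂ] Md d) :
    choiPair Φ Ψ = ((d : ℂ)⁻¹) ^ 2 *
      ∑ i, ∑ j, ((Φ (single i j 1))ᴴ * Ψ (single i j 1)).trace := by
  simp only [choiPair, trace, diag, mul_apply, conjTranspose_apply, choi_apply,
    Fintype.sum_prod_type, Finset.mul_sum, star_mul', star_inv₀, star_natCast]
  conv_lhs => enter [2, j]; rw [Finset.sum_comm]
  exact Finset.sum_comm.trans <| Finset.sum_congr rfl fun _ _ => Finset.sum_congr rfl fun _ _ =>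
    Finset.sum_congr rfl fun _ _ => Finset.sum_congr rfl fun _ _ => by ring

lemma star_choiPair (Φ Ψ : Md d →ₗ[ℂ] Md d) : star (choiPair Φ Ψ) = choiPair Ψ Φ := by
  rw [choiPair, choiPair, ← trace_conjTranspose, conjTranspose_mul, conjTranspose_conjTranspose]

@[simp]
lemma choiPair_add_left (Φ Φ' Ψ : Md d →ₗ[ℂ] Md d) :
    choiPair (Φ + Φ') Ψ = choiPair Φ Ψ + choiPair Φ' Ψ := by
  simp [choiPair_eq_sum, conjTranspose_add, add_mul, trace_add, Finset.sum_add_distrib, mul_add]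

@[simp]
lemma choiPair_add_right (Φ Ψ Ψ' : Md d →ₗ[ℂ] Md d) :
    choiPair Φ (Ψ + Ψ') = choiPair Φ Ψ + choiPair Φ Ψ' := by
  simp [choiPair_eq_sum, mul_add, trace_add, Finset.sum_add_distrib]

@[simp]
lemma choiPair_sub_right (Φ Ψ Ψ' : Md d →ₗ[ℂ] Md d) :
    choiPair Φ (Ψ - Ψ') = choiPair Φ Ψ - choiPair Φ Ψ' := by
  simp [choiPair_eq_sum, mul_sub, trace_sub, Finset.sum_sub_distrib]

@[simp]
lemma choiPair_smul_left (c : ℂ) (Φ Ψ : Md d →ₗ[ℂ] Md d) :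
    choiPair (c • Φ) Ψ = star c * choiPair Φ Ψ := by
  simp [choiPair_eq_sum, conjTranspose_smul, Finset.mul_sum, mul_left_comm]

@[simp]
lemma choiPair_smul_right (c : ℂ) (Φ Ψ : Md d →ₗ[ℂ] Md d) :
    choiPair Φ (c • Ψ) = c * choiPair Φ Ψ := by
  simp [choiPair_eq_sum, Finset.mul_sum, mul_left_comm]

end ChoiPair

section HermitianPreserving

variable {d : ℕ} {Φ Ψ : Md d →ₗ[ℂ] Md d}

lemma isHermitianPreserving_id : IsHermitianPreserving (LinearMap.id : Md d →ₗ[ℂ] Md d) :=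
  fun _ => rfl

lemma IsHermitianPreserving.add (hΦ : IsHermitianPreserving Φ) (hΨ : IsHermitianPreserving Ψ) :
    IsHermitianPreserving (Φ + Ψ) := fun X => by
  simp [hΦ X, hΨ X]

lemma IsHermitianPreserving.sub (hΦ : IsHermitianPreserving Φ) (hΨ : IsHermitianPreserving Ψ) :
    IsHermitianPreserving (Φ - Ψ) := fun X => by
  simp [hΦ X, hΨ X]

lemma IsHermitianPreserving.smul (hΦ : IsHermitianPreserving Φ) {c : ℂ} (hc : star c = c) :
    IsHermitianPreserving (c • Φ) := fun X => by
  simp [hΦ X, conjTranspose_smul, hc]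

end HermitianPreserving

section ModelMaps

variable {d : ℕ}

def transposeConj (B : Md d) : Md d →ₗ[ℂ] Md d where
  toFun X := B * Xᵀ * Bᴴ
  map_add' X Y := by simp [Matrix.mul_add, Matrix.add_mul]
  map_smul' c X := by simp

def traceSmulOne (d : ℕ) : Md d →ₗ[ℂ] Md d := (traceLinearMap (Fin d) ℂ ℂ).smulRight 1

lemma transposeConj_apply (B X : Md d) : transposeConj B X = B * Xᵀ * Bᴴ := rfl

@[simp]
lemma traceSmulOne_apply (X : Md d) : traceSmulOne d X = X.trace • 1 := rfl

lemma adU_one : adU (1 : unitaryGroup (Fin d) ℂ) = LinearMap.id := by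
  ext X : 1
  simp [adU]

lemma isHermitianPreserving_transposeConj (B : Md d) :
    IsHermitianPreserving (transposeConj B) := fun X => by
  simp [transposeConj_apply, conjTranspose_mul, Matrix.mul_assoc, conjTranspose_transpose,
    transpose_conjTranspose]

lemma isHermitianPreserving_traceSmulOne : IsHermitianPreserving (traceSmulOne d) := fun X => by
  simp [trace_conjTranspose]

lemma transposeConj_one {B : Md d} (hB : B ∈ unitaryGroup (Fin d) ℂ) :
    transposeConj B 1 = 1 := by
  rw [transposeConj_apply, transpose_one, Matrix.mul_one]
  exact mem_unitaryGroup_iff.mp hB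

lemma trace_transposeConj {B : Md d} (hB : B ∈ unitaryGroup (Fin d) ℂ) (X : Md d) :
    (transposeConj B X).trace = X.trace := by
  rw [transposeConj_apply, trace_mul_cycle, ← star_eq_conjTranspose, mem_unitaryGroup_iff'.mp hB,
    Matrix.one_mul, trace_transpose]

lemma choiPair_adU_transposeConj (U : unitaryGroup (Fin d) ℂ) (B : Md d) :
    choiPair (adU U) (transposeConj B) =
      ((d : ℂ)⁻¹) ^ 2 * (((U : Md d) * B)ᴴ * ((U : Md d) * B)ᵀ).trace := by
  set C := (U : Md d) * B
  have term : ∀ i j, ((adU U (single i j 1))ᴴ * transposeConj B (single i j 1)).trace =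
      C i j * Cᴴ i j := fun i j => by
    calc _ = (single j i 1 * C * single j i 1 * Cᴴ).trace := by
          simp only [adU, C, LinearMap.coe_mk, AddHom.coe_mk, transposeConj_apply,
            conjTranspose_mul, conjTranspose_conjTranspose, conjTranspose_single, star_one,
            transpose_single, Matrix.mul_assoc]
          rw [trace_mul_comm]
          simp only [Matrix.mul_assoc]
      _ = C i j * Cᴴ i j := by simp [single_mul_mul_single, trace_single_mul]
  rw [choiPair_eq_sum]
  simp only [term]
  congr 1
  simp only [trace, diag, mul_apply, transpose_apply]
  exact Finset.sum_congr rfl fun _ _ => Finset.sum_congr rfl fun _ _ => mul_comm _ _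

lemma choiPair_adU_traceSmulOne [NeZero d] (U : unitaryGroup (Fin d) ℂ) :
    choiPair (adU U) (traceSmulOne d) = (d : ℂ)⁻¹ := by
  have term : ∀ i j, ((adU U (single i j 1))ᴴ * traceSmulOne d (single i j 1)).trace =
      if i = j then 1 else 0 := fun i j => by
    rw [traceSmulOne_apply, Matrix.mul_smul, Matrix.mul_one, trace_smul, trace_conjTranspose,
      show adU U (single i j 1) = (U : Md d)ᴴ * single i j 1 * (U : Md d) from rfl,
      trace_conjTranspose_conj_of_mem_unitaryGroup U.2, trace_single]
    split_ifs <;> simp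
  rw [choiPair_eq_sum]
  simp only [term]
  simp
  field_simp [NeZero.ne d]

lemma choiPair_id_transposeConj (B : Md d) :
    choiPair LinearMap.id (transposeConj B) = ((d : ℂ)⁻¹) ^ 2 * (Bᴴ * Bᵀ).trace := by
  rw [← adU_one, choiPair_adU_transposeConj]
  simp

lemma choiPair_id_traceSmulOne [NeZero d] :
    choiPair LinearMap.id (traceSmulOne d) = (d : ℂ)⁻¹ := by
  rw [← adU_one, choiPair_adU_traceSmulOne]

lemma choiPair_transposeConj_self [NeZero d] {B : Md d} (hB : B ∈ unitaryGroup (Fin d) ℂ) :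
    choiPair (transposeConj B) (transposeConj B) = 1 := by
  have term : ∀ i j,
      ((transposeConj B (single i j 1))ᴴ * transposeConj B (single i j 1)).trace = 1 :=
    fun i j => by
      have : (B * single j i 1 * Bᴴ)ᴴ * (B * single j i 1 * Bᴴ) = B * single i i 1 * Bᴴ := by
        simp only [conjTranspose_mul, conjTranspose_conjTranspose, conjTranspose_single,
          star_one, Matrix.mul_assoc]
        rw [← Matrix.mul_assoc Bᴴ B, ← star_eq_conjTranspose, mem_unitaryGroup_iff'.mp hB,
          Matrix.one_mul, ← Matrix.mul_assoc (single i j 1), single_mul_single_same, one_mul]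
      rw [transposeConj_apply, transpose_single, this, trace_conj_of_mem_unitaryGroup hB,
        trace_single, if_pos rfl]
  rw [choiPair_eq_sum]
  simp only [term]
  simp
  field_simp [NeZero.ne d]

lemma choiPair_transposeConj_traceSmulOne [NeZero d] {B : Md d}
    (hB : B ∈ unitaryGroup (Fin d) ℂ) :
    choiPair (transposeConj B) (traceSmulOne d) = (d : ℂ)⁻¹ := by
  have term : ∀ i j, ((transposeConj B (single i j 1))ᴴ * traceSmulOne d (single i j 1)).trace =
      if i = j then 1 else 0 := fun i j => by
    rw [traceSmulOne_apply, Matrix.mul_smul, Matrix.mul_one, trace_smul, trace_conjTranspose,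
      transposeConj_apply, transpose_single, trace_conj_of_mem_unitaryGroup hB, trace_single,
      trace_single]
    split_ifs <;> simp_all
  rw [choiPair_eq_sum]
  simp only [term]
  simp
  field_simp [NeZero.ne d]

lemma choiPair_traceSmulOne_self [NeZero d] :
    choiPair (traceSmulOne d) (traceSmulOne d) = 1 := by
  have term : ∀ i j : Fin d,
      ((traceSmulOne d (single i j 1))ᴴ * traceSmulOne d (single i j 1)).trace =
        if i = j then (d : ℂ) else 0 := fun i j => by
    rw [traceSmulOne_apply, trace_single]
    split_ifs <;> simp
  rw [choiPair_eq_sum]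
  simp only [term]
  simp
  field_simp [NeZero.ne d]

end ModelMaps

lemma memD_two_inv_smul_transposeConj_add {B : Md 3} (hB : B ∈ unitaryGroup (Fin 3) ℂ)
    (htrB : (Bᴴ * Bᵀ).trace = -1) :
    MemD ((2 : ℂ)⁻¹ • (transposeConj B + (3 : ℂ)⁻¹ • traceSmulOne 3)) := by
  refine ⟨((isHermitianPreserving_transposeConj B).add
      (isHermitianPreserving_traceSmulOne.smul (by norm_num))).smul (by norm_num), ?_,
    fun X => ?_, ?_, fun U => ?_⟩
  · simp [IsUnital, transposeConj_one hB]; module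
  · simp [trace_transposeConj hB]; ring
  · simp [pairRe_eq_re_choiPair, choiPair_id_transposeConj, htrB, choiPair_id_traceSmulOne]
    norm_num
  · set t := (((U : Md 3) * B)ᴴ * ((U : Md 3) * B)ᵀ).trace
    have ht : -1 ≤ t.re := neg_one_le_re_trace_conjTranspose_mul_transpose (mul_mem U.2 hB)
    have hpair : choiPair (adU U) ((2 : ℂ)⁻¹ • (transposeConj B + (3 : ℂ)⁻¹ • traceSmulOne 3)) =
        Complex.ofReal 18⁻¹ * (t + 1) := by
      simp only [choiPair_smul_right, choiPair_add_right, choiPair_adU_transposeConj,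
        choiPair_adU_traceSmulOne]
      push_cast; ring
    rw [pairRe_eq_re_choiPair, hpair, Complex.re_ofReal_mul, Complex.add_re, Complex.one_re]
    exact mul_nonneg (by norm_num) (by linarith)

/-- for a unitary `B ∈ M_3` with `tr(B* Bᵀ) = −1`, the maps
`L(X) = (1/2)(tr(X) I₃ − B Xᵀ B* − 2X)` and `Γ(X) = (1/2)(B Xᵀ B* + (1/3) tr(X) I₃)`
satisfy: `L` is Hermitian-preserving with `L(I₃) = 0` and `tr(L(X)) = 0`;
`Γ ∈ D(3)`; and `⟨Γ, L⟩ = −1/9`. -/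
theorem stmt_16 (B : Md 3) (hB : B ∈ Matrix.unitaryGroup (Fin 3) ℂ)
    (htrB : (Bᴴ * Bᵀ).trace = -1)
    (L Γ : Md 3 →ₗ[ℂ] Md 3)
    (hL : ∀ X : Md 3,
      L X = (2 : ℂ)⁻¹ • (X.trace • (1 : Md 3) - B * Xᵀ * Bᴴ - (2 : ℂ) • X))
    (hΓ : ∀ X : Md 3,
      Γ X = (2 : ℂ)⁻¹ • (B * Xᵀ * Bᴴ + (3 : ℂ)⁻¹ • (X.trace • (1 : Md 3)))) :
    (IsHermitianPreserving L ∧ L 1 = 0 ∧ ∀ X : Md 3, (L X).trace = 0) ∧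
    MemD Γ ∧
    pairRe Γ L = -(1 / 9) := by
  obtain rfl : Γ = (2 : ℂ)⁻¹ • (transposeConj B + (3 : ℂ)⁻¹ • traceSmulOne 3) := by
    ext1 X; simp [hΓ, transposeConj_apply]
  obtain rfl : L = (2 : ℂ)⁻¹ • (traceSmulOne 3 - transposeConj B - (2 : ℂ) • LinearMap.id) := by
    ext1 X; simp [hL, transposeConj_apply]
  have hTid : choiPair (transposeConj B) LinearMap.id = -9⁻¹ := by
    rw [← star_choiPair, choiPair_id_transposeConj, htrB]; norm_num
  have hτid : choiPair (traceSmulOne 3) LinearMap.id = 3⁻¹ := by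
    rw [← star_choiPair, choiPair_id_traceSmulOne]; norm_num
  have hτT : choiPair (traceSmulOne 3) (transposeConj B) = 3⁻¹ := by
    rw [← star_choiPair, choiPair_transposeConj_traceSmulOne hB]; norm_num
  refine ⟨⟨?_, ?_, fun X => ?_⟩, memD_two_inv_smul_transposeConj_add hB htrB, ?_⟩
  · exact ((isHermitianPreserving_traceSmulOne.sub (isHermitianPreserving_transposeConj B)).sub
      (isHermitianPreserving_id.smul (by norm_num))).smul (by norm_num)
  · simp [transposeConj_one hB]; module
  · simp [trace_transposeConj hB]; ring
  · simp [pairRe_eq_re_choiPair, hTid, hτid, hτT, choiPair_transposeConj_self hB,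
      choiPair_transposeConj_traceSmulOne hB, choiPair_traceSmulOne_self]
    norm_num
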